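/- Let (E, F) be a resistance form on a set X whose resistance metric R is complete and such that (X,R) is doubling and uniformly perfect. Then for every η ∈ (0,1) there exists C > 0 such that C^{-1} r ≤ 𝓡(cl(B_R(x,ηr)), X∖B_R(x,r)) ≤ C r for every x ∈ X and r > 0 with B_R(x,r) ≠ X. -/

import Mathlib

open Filter Set Metric
open scoped ENNReal Topology

/-- A resistance form `(E, F)` on a set `X` (Kigami):
`F` is a linear subspace of the real-valued functions on `X`, `E` is a nonnegative
symmetric bilinear form on `F` such that (RF1) constants belong to `F` and
`E(u,u) = 0` iff `u` is constant, (RF2) the quotient of `F` by the constants is a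
Hilbert space under `E` (stated as completeness of the `E`-seminorm on `F`),
(RF3) points of `X` are separated by `F`, (RF4) for `x ≠ y` the quantity
`R(x,y) = (inf {E(u,u) : u ∈ F, u x = 1, u y = 0})⁻¹` is finite (i.e. the infimum
is positive; an admissible `u` always exists), and (RF5) the Markov property holds
for the unit truncation. -/
structure ResistanceForm (X : Type*) where
  F : Set (X → ℝ)
  E : (X → ℝ) → (X → ℝ) → ℝ
  zero_mem : (0 : X → ℝ) ∈ F
  add_mem : ∀ {u v : X → ℝ}, u ∈ F → v ∈ F → u + v ∈ F
  smul_mem : ∀ (c : ℝ) {u : X → ℝ}, u ∈ F → c • u ∈ F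
  const_mem : ∀ c : ℝ, (fun _ => c) ∈ F
  symm : ∀ u ∈ F, ∀ v ∈ F, E u v = E v u
  add_left : ∀ u ∈ F, ∀ v ∈ F, ∀ w ∈ F, E (u + v) w = E u w + E v w
  smul_left : ∀ (c : ℝ), ∀ u ∈ F, ∀ v ∈ F, E (c • u) v = c * E u v
  nonneg : ∀ u ∈ F, 0 ≤ E u u
  null_iff_const : ∀ u ∈ F, (E u u = 0 ↔ ∃ c : ℝ, ∀ x, u x = c)
  complete : ∀ u : ℕ → (X → ℝ), (∀ n, u n ∈ F) →
    (∀ ε : ℝ, 0 < ε → ∃ N : ℕ, ∀ m ≥ N, ∀ n ≥ N, E (u m - u n) (u m - u n) < ε) →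
    ∃ v ∈ F, ∀ ε : ℝ, 0 < ε → ∃ N : ℕ, ∀ n ≥ N, E (v - u n) (v - u n) < ε
  sep : ∀ x y : X, x ≠ y → ∃ u ∈ F, u x ≠ u y
  exists_unit : ∀ x y : X, x ≠ y → ∃ u ∈ F, u x = 1 ∧ u y = 0
  inf_pos : ∀ x y : X, x ≠ y →
    0 < sInf {e : ℝ | ∃ u ∈ F, u x = 1 ∧ u y = 0 ∧ E u u = e}
  markov : ∀ u ∈ F, (fun x => max 0 (min 1 (u x))) ∈ F ∧
    E (fun x => max 0 (min 1 (u x))) (fun x => max 0 (min 1 (u x))) ≤ E u u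

namespace ResistanceForm

variable {X : Type*}

open Classical in
/-- The resistance metric `R` associated with a resistance form:
`R(x,x) = 0` and `R(x,y) = (inf {E(u,u) : u ∈ F, u x = 1, u y = 0})⁻¹` for `x ≠ y`. -/
noncomputable def rmetric (rf : ResistanceForm X) (x y : X) : ℝ :=
  if x = y then 0
  else (sInf {e : ℝ | ∃ u ∈ rf.F, u x = 1 ∧ u y = 0 ∧ rf.E u u = e})⁻¹

open Classical in
/-- The resistance `𝓡(A,B)` between two sets: the reciprocal of the minimal energy of
functions that are `≡ 1` on `A` and `≡ 0` on `B` if such functions exist, `0` if no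
such function exists, and `∞` if `A` or `B` is empty. -/
noncomputable def setRes (rf : ResistanceForm X) (A B : Set X) : ℝ≥0∞ :=
  if A.Nonempty ∧ B.Nonempty then
    (if ∃ u ∈ rf.F, (∀ x ∈ A, u x = 1) ∧ (∀ x ∈ B, u x = 0) then
      (ENNReal.ofReal
        (sInf {e : ℝ | ∃ u ∈ rf.F, (∀ x ∈ A, u x = 1) ∧ (∀ x ∈ B, u x = 0) ∧ rf.E u u = e}))⁻¹
    else 0)
  else ⊤

end ResistanceForm

/-- A distance function `ρ` on `X` is doubling: there is `N ∈ ℕ` such that every ball of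
radius `2r` is covered by `N` balls of radius `r`. -/
def DoublingOf {X : Type*} (ρ : X → X → ℝ) : Prop :=
  ∃ N : ℕ, ∀ (x : X) (r : ℝ), ∃ s : Finset X, s.card ≤ N ∧
    {y : X | ρ x y < 2 * r} ⊆ ⋃ z ∈ s, {y : X | ρ z y < r}

/-- A distance function `ρ` on `X` is uniformly perfect: there is `γ > 1` such that
`B(x, γ r) \ B(x, r) ≠ ∅` whenever `B(x,r)` is not the whole space. -/
def UniformlyPerfectOf {X : Type*} (ρ : X → X → ℝ) : Prop :=
  ∃ γ : ℝ, 1 < γ ∧ ∀ (x : X) (r : ℝ), 0 < r → {y : X | ρ x y < r} ≠ Set.univ →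
    ({y : X | ρ x y < γ * r} \ {y : X | ρ x y < r}).Nonempty

/-!
The upper bound is the two-point estimate: uniform perfectness gives `b ∉ B(x,r)` with
`R(x,b) < γ r`, and `𝓡(A,B) ≤ R(x,b)` whenever `x ∈ A` and `b ∈ B`.

The lower bound needs a cutoff function of energy `≲ 1/r`, and everything rests on the Hölder
estimate `(u z - u w)² ≤ R(z,w) E(u,u)`. Around a point `y`, cover each annulus
`4ᵏ s ≤ R(y,·) < 4ᵏ⁺¹ s` by boundedly many (doubling) small balls and add up truncated potentials
vanishing at `y` and equal to `1` at the centres. The `√E` of the `k`-th block decays like `2⁻ᵏ`,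
so by (RF2) the series converges in `F` to a function of energy `≲ 1/s` that is `≥ 3/4` off
`B(y,s)`, and by the Hölder estimate `≤ 1/4` on `B(y,η₀ s)`; rescaling and truncating gives a
cutoff. Summing the cutoffs centred on a doubling cover of `cl B(x,ηr)` and truncating once more
gives the required function.
-/

def unitTrunc {X : Type*} (u : X → ℝ) : X → ℝ := fun x => max 0 (min 1 (u x))

section UnitTrunc

variable {X : Type*} {u : X → ℝ} {x : X}

lemma unitTrunc_nonneg : 0 ≤ unitTrunc u x := le_max_left _ _

lemma unitTrunc_of_one_le (h : 1 ≤ u x) : unitTrunc u x = 1 := by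
  simp [unitTrunc, min_eq_left h]

lemma unitTrunc_of_nonpos (h : u x ≤ 0) : unitTrunc u x = 0 := by
  simp [unitTrunc, h]

end UnitTrunc

namespace ResistanceForm

variable {X : Type*} (rf : ResistanceForm X)

lemma unitTrunc_mem {u : X → ℝ} (hu : u ∈ rf.F) : unitTrunc u ∈ rf.F := (rf.markov u hu).1

lemma E_unitTrunc_le {u : X → ℝ} (hu : u ∈ rf.F) :
    rf.E (unitTrunc u) (unitTrunc u) ≤ rf.E u u :=
  (rf.markov u hu).2

lemma neg_mem {u : X → ℝ} (hu : u ∈ rf.F) : -u ∈ rf.F := by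
  simpa using rf.smul_mem (-1) hu

lemma sub_mem {u v : X → ℝ} (hu : u ∈ rf.F) (hv : v ∈ rf.F) : u - v ∈ rf.F := by
  simpa [sub_eq_add_neg] using rf.add_mem hu (rf.neg_mem hv)

lemma sum_mem {ι : Type*} (s : Finset ι) {f : ι → X → ℝ} (hf : ∀ i ∈ s, f i ∈ rf.F) :
    ∑ i ∈ s, f i ∈ rf.F := by
  classical
  induction s using Finset.induction_on with
  | empty => simpa using rf.zero_mem
  | insert i s hi ih =>
    rw [Finset.sum_insert hi]
    exact rf.add_mem (hf i (s.mem_insert_self i))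
      (ih fun j hj => hf j (Finset.mem_insert_of_mem hj))

variable {u v w : X → ℝ}

lemma E_add_right (hu : u ∈ rf.F) (hv : v ∈ rf.F) (hw : w ∈ rf.F) :
    rf.E u (v + w) = rf.E u v + rf.E u w := by
  rw [rf.symm u hu _ (rf.add_mem hv hw), rf.add_left v hv w hw u hu, rf.symm v hv u hu,
    rf.symm w hw u hu]

lemma E_smul_right (c : ℝ) (hu : u ∈ rf.F) (hv : v ∈ rf.F) :
    rf.E u (c • v) = c * rf.E u v := by
  rw [rf.symm u hu _ (rf.smul_mem c hv), rf.smul_left c v hv u hu, rf.symm v hv u hu]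

lemma E_add_self (hu : u ∈ rf.F) (hv : v ∈ rf.F) :
    rf.E (u + v) (u + v) = rf.E u u + 2 * rf.E u v + rf.E v v := by
  rw [rf.add_left u hu v hv _ (rf.add_mem hu hv), rf.E_add_right hu hu hv,
    rf.E_add_right hv hu hv, rf.symm v hv u hu]
  ring

lemma E_smul_self (c : ℝ) (hu : u ∈ rf.F) : rf.E (c • u) (c • u) = c ^ 2 * rf.E u u := by
  rw [rf.smul_left c u hu _ (rf.smul_mem c hu), rf.E_smul_right c hu hu]
  ring

lemma E_sub_comm (hu : u ∈ rf.F) (hv : v ∈ rf.F) :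
    rf.E (u - v) (u - v) = rf.E (v - u) (v - u) := by
  rw [← neg_sub v u, ← neg_one_smul ℝ (v - u), rf.E_smul_self _ (rf.sub_mem hv hu)]
  ring

lemma E_sq_le_mul (hu : u ∈ rf.F) (hv : v ∈ rf.F) : rf.E u v ^ 2 ≤ rf.E u u * rf.E v v := by
  have hquad : ∀ t : ℝ, 0 ≤ rf.E v v * (t * t) + 2 * rf.E u v * t + rf.E u u := by
    intro t
    have h := rf.nonneg _ (rf.add_mem hu (rf.smul_mem t hv))
    rw [rf.E_add_self hu (rf.smul_mem t hv), rf.E_smul_right t hu hv, rf.E_smul_self t hv] at h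
    linarith
  have := discrim_le_zero hquad
  rw [discrim] at this
  linarith

lemma sqrt_E_add_le (hu : u ∈ rf.F) (hv : v ∈ rf.F) :
    √(rf.E (u + v) (u + v)) ≤ √(rf.E u u) + √(rf.E v v) := by
  rw [Real.sqrt_le_left (by positivity), rf.E_add_self hu hv, add_sq,
    Real.sq_sqrt (rf.nonneg u hu), Real.sq_sqrt (rf.nonneg v hv), mul_assoc,
    ← Real.sqrt_mul (rf.nonneg u hu)]
  have := (abs_le.1 (Real.abs_le_sqrt (rf.E_sq_le_mul hu hv))).2
  linarith

lemma sqrt_E_sum_le {ι : Type*} (s : Finset ι) {f : ι → X → ℝ} (hf : ∀ i ∈ s, f i ∈ rf.F) :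
    √(rf.E (∑ i ∈ s, f i) (∑ i ∈ s, f i)) ≤ ∑ i ∈ s, √(rf.E (f i) (f i)) := by
  classical
  induction s using Finset.induction_on with
  | empty => simp [show rf.E 0 0 = 0 from (rf.null_iff_const 0 rf.zero_mem).2 ⟨0, fun _ => rfl⟩]
  | insert i s hi ih =>
    have hs : ∀ j ∈ s, f j ∈ rf.F := fun j hj => hf j (Finset.mem_insert_of_mem hj)
    rw [Finset.sum_insert hi, Finset.sum_insert hi]
    exact (rf.sqrt_E_add_le (hf i (s.mem_insert_self i)) (rf.sum_mem s hs)).trans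
      (add_le_add_right (ih hs) _)

lemma sqrt_E_sum_le_card_mul {ι : Type*} (s : Finset ι) {f : ι → X → ℝ}
    (hf : ∀ i ∈ s, f i ∈ rf.F) {e : ℝ} (he : ∀ i ∈ s, rf.E (f i) (f i) ≤ e) :
    √(rf.E (∑ i ∈ s, f i) (∑ i ∈ s, f i)) ≤ s.card * √e :=
  (rf.sqrt_E_sum_le s hf).trans <| by
    simpa using Finset.sum_le_card_nsmul s _ _ fun i hi => Real.sqrt_le_sqrt (he i hi)

lemma E_const_left (c : ℝ) (hv : v ∈ rf.F) : rf.E (fun _ => c) v = 0 := by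
  have hc : rf.E (fun _ => c) (fun _ => c) = 0 :=
    (rf.null_iff_const _ (rf.const_mem c)).2 ⟨c, fun _ => rfl⟩
  have := rf.E_sq_le_mul (rf.const_mem c) hv
  rw [hc, zero_mul] at this
  exact pow_eq_zero_iff (n := 2) two_ne_zero |>.1 (le_antisymm this (sq_nonneg _))

lemma E_add_const (hu : u ∈ rf.F) (c : ℝ) :
    rf.E (u + fun _ => c) (u + fun _ => c) = rf.E u u := by
  rw [rf.E_add_self hu (rf.const_mem c), rf.symm u hu _ (rf.const_mem c), rf.E_const_left c hu,
    rf.E_const_left c (rf.const_mem c)]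
  ring

lemma rmetric_pos {x y : X} (h : x ≠ y) : 0 < rf.rmetric x y := by
  rw [rmetric, if_neg h]
  exact inv_pos.2 (rf.inf_pos x y h)

lemma rmetric_nonneg (x y : X) : 0 ≤ rf.rmetric x y := by
  rcases eq_or_ne x y with rfl | h
  · simp [rmetric]
  · exact (rf.rmetric_pos h).le

lemma inv_rmetric_le_E {x y : X} (h : x ≠ y) {u : X → ℝ} (hu : u ∈ rf.F) (hx : u x = 1)
    (hy : u y = 0) : (rf.rmetric x y)⁻¹ ≤ rf.E u u := by
  rw [rmetric, if_neg h, inv_inv]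
  exact csInf_le ⟨0, by rintro _ ⟨v, hv, -, -, rfl⟩; exact rf.nonneg v hv⟩ ⟨u, hu, hx, hy, rfl⟩

lemma sq_sub_le_rmetric_mul_E {u : X → ℝ} (hu : u ∈ rf.F) (z w : X) :
    (u z - u w) ^ 2 ≤ rf.rmetric z w * rf.E u u := by
  rcases eq_or_ne (u z) (u w) with he | he
  · rw [he, sub_self, sq, zero_mul]
    exact mul_nonneg (rf.rmetric_nonneg z w) (rf.nonneg u hu)
  have hzw : z ≠ w := fun h => he (h ▸ rfl)
  have hΔ : u z - u w ≠ 0 := sub_ne_zero.2 he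
  have hu' : (u + fun _ => -u w) ∈ rf.F := rf.add_mem hu (rf.const_mem _)
  have key := rf.inv_rmetric_le_E hzw (rf.smul_mem (u z - u w)⁻¹ hu')
    (by simp [hΔ, ← sub_eq_add_neg]) (by simp)
  rw [rf.E_smul_self _ hu', rf.E_add_const hu, inv_pow, ← div_eq_inv_mul,
    le_div_iff₀ (by positivity), inv_mul_le_iff₀ (rf.rmetric_pos hzw)] at key
  exact key

lemma abs_sub_le_sqrt_rmetric_mul {u : X → ℝ} (hu : u ∈ rf.F) (z w : X) :
    |u z - u w| ≤ √(rf.rmetric z w) * √(rf.E u u) := by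
  rw [← Real.sqrt_mul (rf.rmetric_nonneg z w)]
  exact Real.abs_le_sqrt (rf.sq_sub_le_rmetric_mul_E hu z w)

lemma exists_potential {y z : X} (h : z ≠ y) :
    ∃ u ∈ rf.F, (∀ w, 0 ≤ u w) ∧ u y = 0 ∧ u z = 1 ∧
      rf.E u u ≤ 2 / rf.rmetric z y := by
  have hpos := rf.inf_pos z y h
  obtain ⟨v, hv, hvz, hvy⟩ := rf.exists_unit z y h
  -- the infimum defining `R(z, y)` is approached within a factor `2`
  obtain ⟨_, ⟨u, hu, huz, huy, rfl⟩, hlt⟩ :=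
    exists_lt_of_csInf_lt ⟨_, by exact ⟨v, hv, hvz, hvy, rfl⟩⟩ (lt_two_mul_self hpos)
  refine ⟨unitTrunc u, rf.unitTrunc_mem hu, fun _ => unitTrunc_nonneg,
    unitTrunc_of_nonpos huy.le, unitTrunc_of_one_le huz.ge, ?_⟩
  rw [rmetric, if_neg h, div_inv_eq_mul]
  exact (rf.E_unitTrunc_le hu).trans hlt.le

lemma setRes_le_ofReal_rmetric {A B : Set X} {x y : X} (hx : x ∈ A) (hy : y ∈ B)
    (hxy : x ≠ y) :
    rf.setRes A B ≤ ENNReal.ofReal (rf.rmetric x y) := by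
  rw [setRes, if_pos ⟨⟨x, hx⟩, ⟨y, hy⟩⟩]
  split_ifs with hadm
  · obtain ⟨u, hu, hA, hB⟩ := hadm
    have hinf : (rf.rmetric x y)⁻¹ ≤ sInf {e : ℝ | ∃ u ∈ rf.F, (∀ x ∈ A, u x = 1) ∧
        (∀ x ∈ B, u x = 0) ∧ rf.E u u = e} :=
      le_csInf ⟨_, u, hu, hA, hB, rfl⟩ fun _ ⟨v, hv, hvA, hvB, hE⟩ =>
        hE ▸ rf.inv_rmetric_le_E hxy hv (hvA x hx) (hvB y hy)
    calc _ ≤ (ENNReal.ofReal (rf.rmetric x y)⁻¹)⁻¹ :=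
          ENNReal.inv_le_inv.2 (ENNReal.ofReal_le_ofReal hinf)
      _ = _ := by rw [ENNReal.ofReal_inv_of_pos (rf.rmetric_pos hxy), inv_inv]
  · exact zero_le

lemma inv_ofReal_E_le_setRes {A B : Set X} {u : X → ℝ} (hu : u ∈ rf.F) (hA : ∀ x ∈ A, u x = 1)
    (hB : ∀ x ∈ B, u x = 0) : (ENNReal.ofReal (rf.E u u))⁻¹ ≤ rf.setRes A B := by
  rw [setRes]
  split_ifs with hne hadm
  · refine ENNReal.inv_le_inv.2 (ENNReal.ofReal_le_ofReal (csInf_le ?_ ⟨u, hu, hA, hB, rfl⟩))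
    exact ⟨0, by rintro _ ⟨v, hv, -, -, rfl⟩; exact rf.nonneg v hv⟩
  · exact absurd ⟨u, hu, hA, hB⟩ hadm
  · exact le_top

lemma exists_tendsto_sqrt_E_of_cauchy {S : ℕ → X → ℝ} (hS : ∀ n, S n ∈ rf.F) {b : ℕ → ℝ}
    (hb : CauchySeq b) (hSb : ∀ m n, √(rf.E (S m - S n) (S m - S n)) ≤ dist (b m) (b n)) :
    ∃ v ∈ rf.F, Tendsto (fun n => √(rf.E (v - S n) (v - S n))) atTop (𝓝 0) := by
  obtain ⟨v, hv, hlim⟩ := rf.complete S hS fun ε hε => by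
    obtain ⟨N, hN⟩ := Metric.cauchySeq_iff.1 hb (√ε) (Real.sqrt_pos.2 hε)
    refine ⟨N, fun m hm n hn => ?_⟩
    rw [← Real.sqrt_lt_sqrt_iff (rf.nonneg _ (rf.sub_mem (hS m) (hS n)))]
    exact (hSb m n).trans_lt (hN m hm n hn)
  refine ⟨v, hv, Metric.tendsto_atTop.2 fun ε hε => ?_⟩
  obtain ⟨N, hN⟩ := hlim (ε ^ 2) (by positivity)
  refine ⟨N, fun n hn => ?_⟩
  rw [Real.dist_eq, sub_zero, abs_of_nonneg (Real.sqrt_nonneg _), Real.sqrt_lt' hε]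
  exact hN n hn

lemma tendsto_sub_of_tendsto_sqrt_E {S : ℕ → X → ℝ} (hS : ∀ n, S n ∈ rf.F) {v : X → ℝ}
    (hv : v ∈ rf.F) (hlim : Tendsto (fun n => √(rf.E (v - S n) (v - S n))) atTop (𝓝 0))
    (w z : X) : Tendsto (fun n => S n w - S n z) atTop (𝓝 (v w - v z)) := by
  rw [tendsto_iff_norm_sub_tendsto_zero]
  refine squeeze_zero (fun _ => norm_nonneg _) (fun n => ?_)
    (by simpa using hlim.const_mul √(rf.rmetric w z))
  rw [Real.norm_eq_abs, ← abs_neg]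
  convert rf.abs_sub_le_sqrt_rmetric_mul (rf.sub_mem hv (hS n)) w z using 2
  simp only [Pi.sub_apply]
  ring

lemma exists_tendsto_sum {q : ℕ → X → ℝ} (hq : ∀ i, q i ∈ rf.F) {y : X} (hqy : ∀ i, q i y = 0)
    {a : ℕ → ℝ} (ha : ∀ i, √(rf.E (q i) (q i)) ≤ a i) (hsum : Summable a) :
    ∃ Q ∈ rf.F, Q y = 0 ∧
      (∀ w, Tendsto (fun n => ∑ i ∈ Finset.range n, q i w) atTop (𝓝 (Q w))) ∧
      √(rf.E Q Q) ≤ ∑' i, a i := by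
  set S : ℕ → X → ℝ := fun n => ∑ i ∈ Finset.range n, q i
  have hS : ∀ n, S n ∈ rf.F := fun n => rf.sum_mem _ fun i _ => hq i
  have hSa : ∀ n, √(rf.E (S n) (S n)) ≤ ∑ i ∈ Finset.range n, a i := fun n =>
    (rf.sqrt_E_sum_le _ fun i _ => hq i).trans (Finset.sum_le_sum fun i _ => ha i)
  have hle : ∀ m n, n ≤ m → √(rf.E (S m - S n) (S m - S n)) ≤
      dist (∑ i ∈ Finset.range m, a i) (∑ i ∈ Finset.range n, a i) := by
    intro m n hnm
    have hSmn : S m - S n = ∑ i ∈ Finset.Ico n m, q i := (Finset.sum_Ico_eq_sub q hnm).symm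
    calc √(rf.E (S m - S n) (S m - S n))
        ≤ ∑ i ∈ Finset.Ico n m, √(rf.E (q i) (q i)) := hSmn ▸ rf.sqrt_E_sum_le _ fun i _ => hq i
      _ ≤ ∑ i ∈ Finset.Ico n m, a i := Finset.sum_le_sum fun i _ => ha i
      _ ≤ _ := by rw [Real.dist_eq, ← Finset.sum_Ico_eq_sub _ hnm]; exact le_abs_self _
  obtain ⟨v, hv, hlim⟩ := rf.exists_tendsto_sqrt_E_of_cauchy hS
    hsum.hasSum.tendsto_sum_nat.cauchySeq fun m n => by
      rcases le_total n m with h | h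
      · exact hle m n h
      · rw [rf.E_sub_comm (hS m) (hS n), dist_comm]
        exact hle n m h
  refine ⟨v + fun _ => -v y, rf.add_mem hv (rf.const_mem _), by simp, fun w => ?_, ?_⟩
  · simpa [S, Finset.sum_apply, hqy, ← sub_eq_add_neg] using
      rf.tendsto_sub_of_tendsto_sqrt_E hS hv hlim w y
  · have hQS : ∀ n, (v + fun _ => -v y) - S n = (v - S n) + fun _ => -v y := fun n => by
      abel
    refine ge_of_tendsto' (by simpa using hlim.add hsum.hasSum.tendsto_sum_nat) fun n => ?_
    calc √(rf.E (v + fun _ => -v y) (v + fun _ => -v y))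
        = √(rf.E (((v - S n) + fun _ => -v y) + S n) (((v - S n) + fun _ => -v y) + S n)) := by
          rw [← hQS, sub_add_cancel]
      _ ≤ √(rf.E ((v - S n) + fun _ => -v y) ((v - S n) + fun _ => -v y)) + √(rf.E (S n) (S n)) :=
          rf.sqrt_E_add_le (rf.add_mem (rf.sub_mem hv (hS n)) (rf.const_mem _)) (hS n)
      _ ≤ _ := by rw [rf.E_add_const (rf.sub_mem hv (hS n))]; exact add_le_add_right (hSa n) _

end ResistanceForm

def DoublingWith {X : Type*} (ρ : X → X → ℝ) (N : ℕ) : Prop :=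
  ∀ (x : X) (r : ℝ), ∃ s : Finset X, s.card ≤ N ∧
    {y : X | ρ x y < 2 * r} ⊆ ⋃ z ∈ s, {y : X | ρ z y < r}

section Doubling

variable {X : Type*} [MetricSpace X]

lemma exists_subset_card_le_cover_two_mul {T : Set X} {s : Finset X} {ρ : ℝ}
    (hT : T ⊆ ⋃ z ∈ s, ball z ρ) :
    ∃ P : Finset X, ↑P ⊆ T ∧ P.card ≤ s.card ∧ T ⊆ ⋃ p ∈ P, ball p (2 * ρ) := by
  classical
  have hsel : ∀ z, ∃ p, (T ∩ ball z ρ).Nonempty → p ∈ T ∩ ball z ρ := fun z =>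
    if h : (T ∩ ball z ρ).Nonempty then ⟨h.some, fun _ => h.some_mem⟩
    else ⟨z, fun h' => absurd h' h⟩
  choose sel hsel using hsel
  refine ⟨(s.filter fun z => (T ∩ ball z ρ).Nonempty).image sel, ?_,
    Finset.card_image_le.trans (Finset.card_filter_le _ _), fun y hy => ?_⟩
  · intro p hp
    obtain ⟨z, hz, rfl⟩ := Finset.mem_image.1 hp
    exact (hsel z (Finset.mem_filter.1 hz).2).1
  · obtain ⟨z, hz, hyz⟩ := mem_iUnion₂.1 (hT hy)
    have hne : (T ∩ ball z ρ).Nonempty := ⟨y, hy, hyz⟩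
    refine mem_iUnion₂.2 ⟨sel z, Finset.mem_image_of_mem _ (Finset.mem_filter.2 ⟨hz, hne⟩), ?_⟩
    calc dist y (sel z) ≤ dist y z + dist (sel z) z := dist_triangle_right _ _ _
      _ < ρ + ρ := add_lt_add hyz (hsel z hne).2
      _ = 2 * ρ := by ring

lemma DoublingWith.exists_cover_ball {N : ℕ} (hN : DoublingWith (fun x y : X => dist x y) N)
    (m : ℕ) (x : X) (r : ℝ) :
    ∃ s : Finset X, s.card ≤ N ^ m ∧ ball x (2 ^ m * r) ⊆ ⋃ z ∈ s, ball z r := by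
  classical
  induction m generalizing r with
  | zero => exact ⟨{x}, by simp, by simp⟩
  | succ m ih =>
    obtain ⟨s, hs, hcov⟩ := ih (2 * r)
    choose t ht htcov using fun z => hN z r
    refine ⟨s.biUnion t, ?_, fun y hy => ?_⟩
    · calc (s.biUnion t).card ≤ ∑ z ∈ s, (t z).card := Finset.card_biUnion_le
        _ ≤ s.card * N := by simpa using Finset.sum_le_card_nsmul s _ N fun z _ => ht z
        _ ≤ N ^ m * N := Nat.mul_le_mul_right N hs
        _ = N ^ (m + 1) := (pow_succ N m).symm
    · rw [pow_succ, mul_assoc] at hy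
      obtain ⟨z, hz, hyz⟩ := mem_iUnion₂.1 (hcov hy)
      obtain ⟨p, hp, hyp⟩ := mem_iUnion₂.1 (htcov z (mem_ball'.1 hyz))
      exact mem_iUnion₂.2 ⟨p, Finset.mem_biUnion.2 ⟨z, hz, hp⟩, mem_ball'.2 hyp⟩

lemma DoublingWith.exists_cover_subset {N : ℕ} (hN : DoublingWith (fun x y : X => dist x y) N)
    (m : ℕ) {c : X} {ρ : ℝ} {T : Set X}
    (hT : T ⊆ ball c (2 ^ m * ρ)) :
    ∃ P : Finset X, ↑P ⊆ T ∧ P.card ≤ N ^ m ∧ T ⊆ ⋃ p ∈ P, ball p (2 * ρ) := by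
  obtain ⟨s, hs, hcov⟩ := hN.exists_cover_ball m c ρ
  obtain ⟨P, hPT, hPs, hPcov⟩ := exists_subset_card_le_cover_two_mul (hT.trans hcov)
  exact ⟨P, hPT, hPs.trans hs, hPcov⟩

end Doubling

namespace ResistanceForm

variable {X : Type*} [MetricSpace X] (rf : ResistanceForm X) {N : ℕ}

lemma exists_annulus_potential (hR : ∀ x y : X, dist x y = rf.rmetric x y)
    (hN : DoublingWith (fun x y : X => dist x y) N) (y : X) {t : ℝ} (ht : 0 < t) :
    ∃ G ∈ rf.F, (∀ w, 0 ≤ G w) ∧ G y = 0 ∧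
      (∀ w, t ≤ dist y w → dist y w < 4 * t → 3 / 4 ≤ G w) ∧
      √(rf.E G G) ≤ N ^ 8 * √(2 / t) := by
  obtain ⟨P, hPT, hPcard, hPcov⟩ := hN.exists_cover_subset 8 (c := y) (ρ := t / 64)
    (T := {w | t ≤ dist y w ∧ dist y w < 4 * t}) fun w hw => by
      rw [mem_ball']
      linarith [hw.2]
  have hPy : ∀ p ∈ P, t ≤ dist p y := fun p hp => dist_comm y p ▸ (hPT hp).1
  have hPne : ∀ p ∈ P, p ≠ y := fun p hp h => by
    have := hPy p hp
    rw [h, dist_self] at this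
    linarith
  choose! pot hpotF hpot0 hpoty hpotp hpotE using fun p (hp : p ≠ y) => rf.exists_potential hp
  have hE : ∀ p ∈ P, rf.E (pot p) (pot p) ≤ 2 / t := fun p hp =>
    (hpotE p (hPne p hp)).trans <| by rw [← hR]; gcongr; exact hPy p hp
  refine ⟨∑ p ∈ P, pot p, rf.sum_mem P fun p hp => hpotF p (hPne p hp), fun w => ?_, ?_,
    fun w hw₁ hw₂ => ?_, ?_⟩
  · rw [Finset.sum_apply]
    exact Finset.sum_nonneg fun p hp => hpot0 p (hPne p hp) w
  · rw [Finset.sum_apply]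
    exact Finset.sum_eq_zero fun p hp => hpoty p (hPne p hp)
  · obtain ⟨p, hp, hwp⟩ := mem_iUnion₂.1 (hPcov ⟨hw₁, hw₂⟩)
    have hclose : (pot p w - 1) ^ 2 ≤ 1 / 16 := by
      calc (pot p w - 1) ^ 2 = (pot p w - pot p p) ^ 2 := by rw [hpotp p (hPne p hp)]
        _ ≤ dist w p * rf.E (pot p) (pot p) :=
            hR w p ▸ rf.sq_sub_le_rmetric_mul_E (hpotF p (hPne p hp)) w p
        _ ≤ 2 * (t / 64) * (2 / t) := by
            gcongr
            · exact rf.nonneg _ (hpotF p (hPne p hp))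
            · exact (mem_ball.1 hwp).le
            · exact hE p hp
        _ = 1 / 16 := by field_simp; norm_num
    calc (3 : ℝ) / 4 ≤ pot p w := by nlinarith
      _ ≤ (∑ q ∈ P, pot q) w := by
          rw [Finset.sum_apply]
          exact Finset.single_le_sum (fun q hq => hpot0 q (hPne q hq) w) hp
  · calc √(rf.E (∑ p ∈ P, pot p) (∑ p ∈ P, pot p)) ≤ P.card * √(2 / t) :=
          rf.sqrt_E_sum_le_card_mul P (fun p hp => hpotF p (hPne p hp)) hE
      _ ≤ N ^ 8 * √(2 / t) := by gcongr; exact_mod_cast hPcard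

lemma exists_far_potential (hR : ∀ x y : X, dist x y = rf.rmetric x y)
    (hN : DoublingWith (fun x y : X => dist x y) N) (y : X) {s : ℝ} (hs : 0 < s) :
    ∃ Q ∈ rf.F, Q y = 0 ∧ (∀ w, s ≤ dist y w → 3 / 4 ≤ Q w) ∧ rf.E Q Q ≤ 8 * N ^ 16 / s := by
  choose G hGF hG0 hGy hGfar hGE using fun k : ℕ =>
    rf.exists_annulus_potential hR hN y (t := 4 ^ k * s) (by positivity)
  have hscale : ∀ k : ℕ, √(2 / (4 ^ k * s)) = √(2 / s) * (1 / 2) ^ k := fun k => by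
    rw [show 2 / (4 ^ k * s) = 2 / s * ((1 / 2) ^ k) ^ 2 by
      rw [← pow_mul, mul_comm k 2, pow_mul]; norm_num [div_pow]; ring,
      Real.sqrt_mul (by positivity), Real.sqrt_sq (by positivity)]
  obtain ⟨Q, hQF, hQy, hQlim, hQE⟩ := rf.exists_tendsto_sum hGF hGy
    (a := fun k => N ^ 8 * √(2 / s) * (1 / 2) ^ k)
    (fun k => (hGE k).trans_eq (by rw [hscale, mul_assoc]))
    (summable_geometric_two.mul_left _)
  rw [tsum_mul_left, tsum_geometric_two] at hQE
  refine ⟨Q, hQF, hQy, fun w hw => ?_, ?_⟩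
  · obtain ⟨k, hk₁, hk₂⟩ := exists_nat_pow_near ((one_le_div hs).2 hw) (by norm_num : (1 : ℝ) < 4)
    rw [le_div_iff₀ hs] at hk₁
    rw [div_lt_iff₀ hs, pow_succ, mul_comm _ (4 : ℝ), mul_assoc] at hk₂
    refine ge_of_tendsto (hQlim w) (eventually_atTop.2 ⟨k + 1, fun n hn => ?_⟩)
    calc (3 : ℝ) / 4 ≤ G k w := hGfar k w hk₁ hk₂
      _ ≤ ∑ i ∈ Finset.range n, G i w :=
          Finset.single_le_sum (fun i _ => hG0 i w) (Finset.mem_range.2 hn)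
  · calc rf.E Q Q = √(rf.E Q Q) ^ 2 := (Real.sq_sqrt (rf.nonneg Q hQF)).symm
      _ ≤ (N ^ 8 * √(2 / s) * 2) ^ 2 := by gcongr
      _ = 8 * N ^ 16 / s := by
          rw [mul_pow, mul_pow, Real.sq_sqrt (by positivity)]
          ring

lemma exists_cutoff (hR : ∀ x y : X, dist x y = rf.rmetric x y)
    (hN : DoublingWith (fun x y : X => dist x y) N) :
    ∃ η₀ > 0, ∀ (y : X) (s : ℝ), 0 < s → ∃ ψ ∈ rf.F, (∀ w, 0 ≤ ψ w) ∧
      (∀ w, dist y w ≤ η₀ * s → ψ w = 1) ∧ (∀ w, s ≤ dist y w → ψ w = 0) ∧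
      rf.E ψ ψ ≤ 32 * N ^ 16 / s := by
  refine ⟨(128 * (N : ℝ) ^ 16 + 1)⁻¹, by positivity, fun y s hs => ?_⟩
  obtain ⟨Q, hQF, hQy, hQfar, hQE⟩ := rf.exists_far_potential hR hN y hs
  have hu : (-2 : ℝ) • Q + (fun _ => 3 / 2) ∈ rf.F :=
    rf.add_mem (rf.smul_mem _ hQF) (rf.const_mem _)
  refine ⟨unitTrunc ((-2 : ℝ) • Q + fun _ => 3 / 2), rf.unitTrunc_mem hu,
    fun w => unitTrunc_nonneg, fun w hw => unitTrunc_of_one_le ?_,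
    fun w hw => unitTrunc_of_nonpos ?_, ?_⟩
  · have hnear : Q w ^ 2 ≤ 1 / 16 := by
      calc Q w ^ 2 = (Q w - Q y) ^ 2 := by rw [hQy, sub_zero]
        _ ≤ dist w y * rf.E Q Q := hR w y ▸ rf.sq_sub_le_rmetric_mul_E hQF w y
        _ ≤ (128 * (N : ℝ) ^ 16 + 1)⁻¹ * s * (8 * N ^ 16 / s) := by
            gcongr
            · exact rf.nonneg Q hQF
            · rw [dist_comm]; exact hw
        _ ≤ 1 / 16 := by
            rw [mul_assoc, mul_div_cancel₀ _ hs.ne', inv_mul_le_iff₀ (by positivity)]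
            linarith
    simp only [Pi.add_apply, Pi.smul_apply, smul_eq_mul]
    nlinarith
  · simp only [Pi.add_apply, Pi.smul_apply, smul_eq_mul]
    linarith [hQfar w hw]
  · calc _ ≤ rf.E ((-2 : ℝ) • Q + fun _ => 3 / 2) ((-2 : ℝ) • Q + fun _ => 3 / 2) :=
          rf.E_unitTrunc_le hu
      _ = 4 * rf.E Q Q := by
          rw [rf.E_add_const (rf.smul_mem _ hQF), rf.E_smul_self _ hQF]
          norm_num
      _ ≤ 4 * (8 * N ^ 16 / s) := by linarith
      _ = 32 * N ^ 16 / s := by ring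

lemma exists_cutoff_ball (hR : ∀ x y : X, dist x y = rf.rmetric x y)
    (hN : DoublingWith (fun x y : X => dist x y) N) {η : ℝ} (hη : η < 1) :
    ∃ C : ℝ, ∀ (x : X) (r : ℝ), 0 < r → ∃ φ ∈ rf.F,
      (∀ w ∈ closure (ball x (η * r)), φ w = 1) ∧ (∀ w ∈ (ball x r)ᶜ, φ w = 0) ∧
      rf.E φ φ ≤ C / r := by
  obtain ⟨η₀, hη₀, hcut⟩ := rf.exists_cutoff hR hN
  obtain ⟨m, hm⟩ := pow_unbounded_of_one_lt (4 / (η₀ * (1 - η))) one_lt_two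
  refine ⟨((N : ℝ) ^ m) ^ 2 * (32 * N ^ 16) * 2 / (1 - η), fun x r hr => ?_⟩
  have hη' : 0 < 1 - η := sub_pos.2 hη
  set s := (1 - η) * r / 2 with hs_def
  have hs : 0 < s := by positivity
  set A := closure (ball x (η * r))
  have hA : ∀ w ∈ A, dist w x ≤ η * r := fun w hw => closure_ball_subset_closedBall hw
  obtain ⟨P, hPA, hPcard, hPcov⟩ := hN.exists_cover_subset m (c := x) (ρ := η₀ * s / 2) (T := A)
    fun w hw => by
      rw [div_lt_iff₀ (by positivity)] at hm
      calc dist w x ≤ η * r := hA w hw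
        _ < r := by nlinarith
        _ < 2 ^ m * (η₀ * s / 2) := by nlinarith
  choose ψ hψF hψnonneg hψnear hψfar hψE using fun p : X => hcut p s hs
  have hΦ : ∑ p ∈ P, ψ p ∈ rf.F := rf.sum_mem P fun p _ => hψF p
  refine ⟨unitTrunc (∑ p ∈ P, ψ p), rf.unitTrunc_mem hΦ, fun w hw => unitTrunc_of_one_le ?_,
    fun w hw => unitTrunc_of_nonpos ?_, ?_⟩
  · obtain ⟨p, hp, hwp⟩ := mem_iUnion₂.1 (hPcov hw)
    rw [Finset.sum_apply, ← hψnear p w (by rw [dist_comm]; linarith [mem_ball.1 hwp])]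
    exact Finset.single_le_sum (fun q _ => hψnonneg q w) hp
  · rw [Finset.sum_apply, Finset.sum_eq_zero fun p hp => hψfar p w ?_]
    have hw' : r ≤ dist w x := not_lt.1 hw
    linarith [hA p (hPA hp), dist_triangle_left w x p]
  · calc _ ≤ rf.E (∑ p ∈ P, ψ p) (∑ p ∈ P, ψ p) := rf.E_unitTrunc_le hΦ
      _ = √(rf.E (∑ p ∈ P, ψ p) (∑ p ∈ P, ψ p)) ^ 2 := (Real.sq_sqrt (rf.nonneg _ hΦ)).symm
      _ ≤ (P.card * √(32 * N ^ 16 / s)) ^ 2 := by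
          gcongr
          exact rf.sqrt_E_sum_le_card_mul P (fun p _ => hψF p) fun p _ => hψE p
      _ ≤ ((N : ℝ) ^ m * √(32 * N ^ 16 / s)) ^ 2 := by gcongr; exact_mod_cast hPcard
      _ = _ := by
          rw [mul_pow, Real.sq_sqrt (by positivity), hs_def]
          field_simp

end ResistanceForm

theorem setRes_ball_annulus_comparable_general {X : Type*} [MetricSpace X]
    (rf : ResistanceForm X) (hR : ∀ x y : X, dist x y = rf.rmetric x y)
    (hdb : DoublingOf fun x y : X => dist x y)
    (hup : UniformlyPerfectOf fun x y : X => dist x y)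
    (η : ℝ) (hη0 : 0 < η) (hη1 : η < 1) :
    ∃ C : ℝ, 0 < C ∧ ∀ (x : X) (r : ℝ), 0 < r → Metric.ball x r ≠ Set.univ →
      ENNReal.ofReal (C⁻¹ * r) ≤
          rf.setRes (closure (Metric.ball x (η * r))) (Metric.ball x r)ᶜ ∧
      rf.setRes (closure (Metric.ball x (η * r))) (Metric.ball x r)ᶜ ≤
          ENNReal.ofReal (C * r) := by
  obtain ⟨N, hN⟩ := hdb
  obtain ⟨γ, hγ, hγball⟩ := hup
  obtain ⟨C₁, hcut⟩ := rf.exists_cutoff_ball hR hN hη1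
  have hC : 0 < max γ C₁ := lt_max_of_lt_left (one_pos.trans hγ)
  refine ⟨max γ C₁, hC, fun x r hr hball => ⟨?_, ?_⟩⟩
  · obtain ⟨φ, hφ, hφA, hφB, hφE⟩ := hcut x r hr
    calc ENNReal.ofReal ((max γ C₁)⁻¹ * r) = (ENNReal.ofReal (max γ C₁ / r))⁻¹ := by
          rw [← ENNReal.ofReal_inv_of_pos (by positivity), inv_div, div_eq_inv_mul]
      _ ≤ (ENNReal.ofReal (rf.E φ φ))⁻¹ := ENNReal.inv_le_inv.2 <| ENNReal.ofReal_le_ofReal <|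
          hφE.trans (by gcongr; exact le_max_right _ _)
      _ ≤ _ := rf.inv_ofReal_E_le_setRes hφ hφA hφB
  · obtain ⟨b, hbγ, hbr⟩ := hγball x r hr fun h => hball (by simpa [ball, dist_comm] using h)
    have hrb : r ≤ dist x b := not_lt.1 hbr
    calc _ ≤ ENNReal.ofReal (rf.rmetric x b) :=
          rf.setRes_le_ofReal_rmetric (subset_closure (mem_ball_self (by positivity)))
            (by simpa [dist_comm] using hrb) (dist_pos.1 (hr.trans_le hrb))
      _ ≤ ENNReal.ofReal (max γ C₁ * r) := by
          rw [← hR]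
          exact ENNReal.ofReal_le_ofReal (hbγ.le.trans (by gcongr; exact le_max_left _ _))

/-- Under the standing assumptions, for every `η ∈ (0,1)` there is
`C > 0` with `C⁻¹ r ≤ 𝓡(cl B(x,ηr), B(x,r)ᶜ) ≤ C r` for all `x ∈ X` and `r > 0` with
`B(x,r) ≠ X`. -/
theorem setRes_ball_annulus_comparable {X : Type*} [MetricSpace X] [CompleteSpace X]
    (rf : ResistanceForm X) (hR : ∀ x y : X, dist x y = rf.rmetric x y)
    (hdb : DoublingOf fun x y : X => dist x y)
    (hup : UniformlyPerfectOf fun x y : X => dist x y)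
    (η : ℝ) (hη0 : 0 < η) (hη1 : η < 1) :
    ∃ C : ℝ, 0 < C ∧ ∀ (x : X) (r : ℝ), 0 < r → Metric.ball x r ≠ Set.univ →
      ENNReal.ofReal (C⁻¹ * r) ≤
          rf.setRes (closure (Metric.ball x (η * r))) (Metric.ball x r)ᶜ ∧
      rf.setRes (closure (Metric.ball x (η * r))) (Metric.ball x r)ᶜ ≤
          ENNReal.ofReal (C * r) :=
  setRes_ball_annulus_comparable_general rf hR hdb hup η hη0 hη1
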